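/- arXiv:2301.10519 — 4 statements merged into one kernel-verified Lean document; each statement's English description precedes it below -/
import Mathlib

section
/- A language over a one-letter alphabet Σ = {a} is QF-MFO-definable if, and only if, it is finite or co-finite (i.e., its complement within {a}⁺ is finite). -/
/-!
A sentence mentions only the atoms `k < last` and `k > last`, each of which is eventually true
or eventually false as the length grows; this dichotomy survives `∧` and `∨`. Conversely,
`last = j` and `last ≠ j` are expressible with these atoms, so a finite language is a finite
disjunction of the former and a co-finite one a finite conjunction of the latter.
-/

/-- Formulas of the quantifier-free logic QF-MFO over the one-letter alphabet.
Variables are naturals; `k` ranges over natural-number constants; `last`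
denotes the last position of the string. -/
inductive QF : Type
  | ltK : ℕ → ℕ → QF       -- `x < k`
  | gtK : ℕ → ℕ → QF       -- `x > k`
  | ltVK : ℕ → ℕ → ℕ → QF  -- `x < y + k`
  | gtVK : ℕ → ℕ → ℕ → QF  -- `x > y + k`
  | lastGt : ℕ → QF        -- `k < last`
  | lastLt : ℕ → QF        -- `k > last`
  | and : QF → QF → QF
  | or : QF → QF → QF

namespace QF

/-- Satisfaction of a QF-MFO formula over the string `aⁿ` (identified with
its length `n`), with assignment `ν` of variables to positions; the last
position is `n - 1`. -/
def Sat (n : ℕ) : (ℕ → ℕ) → QF → Prop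
  | ν, .ltK x k => ν x < k
  | ν, .gtK x k => ν x > k
  | ν, .ltVK x y k => ν x < ν y + k
  | ν, .gtVK x y k => ν x > ν y + k
  | _, .lastGt k => k < n - 1
  | _, .lastLt k => k > n - 1
  | ν, .and φ ψ => Sat n ν φ ∧ Sat n ν ψ
  | ν, .or φ ψ => Sat n ν φ ∨ Sat n ν ψ

/-- Variables occurring in a QF-MFO formula. -/
def fv : QF → Finset ℕ
  | .ltK x _ => {x}
  | .gtK x _ => {x}
  | .ltVK x y _ => {x, y}
  | .gtVK x y _ => {x, y}
  | .lastGt _ => ∅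
  | .lastLt _ => ∅
  | .and φ ψ => fv φ ∪ fv ψ
  | .or φ ψ => fv φ ∪ fv ψ

/-- The language (set of lengths `n ≥ 1`, identifying `aⁿ` with `n`)
defined by a QF-MFO sentence. -/
def Lang (φ : QF) : Set ℕ :=
  {n | 1 ≤ n ∧ Sat n (fun _ => 0) φ}

end QF

open Filter

namespace QF

theorem eventually_sat_or_eventually_not_sat {φ : QF} (hφ : φ.fv = ∅) (ν : ℕ → ℕ) :
    (∀ᶠ n in atTop, Sat n ν φ) ∨ ∀ᶠ n in atTop, ¬Sat n ν φ := by
  induction φ with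
  | ltK | gtK | ltVK | gtVK => simp [fv] at hφ
  | lastGt k =>
    exact .inl <| eventually_atTop.2 ⟨k + 2, fun n hn => show k < n - 1 by omega⟩
  | lastLt k =>
    exact .inr <| eventually_atTop.2 ⟨k + 2, fun n hn => show ¬k > n - 1 by omega⟩
  | and φ ψ ihφ ihψ =>
    rw [fv, Finset.union_eq_empty] at hφ
    rcases ihφ hφ.1 with hφ' | hφ'
    · exact (ihψ hφ.2).imp (hφ'.and ·) (·.mono fun _ h hs => h hs.2)
    · exact .inr <| hφ'.mono fun _ h hs => h hs.1
  | or φ ψ ihφ ihψ =>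
    rw [fv, Finset.union_eq_empty] at hφ
    rcases ihφ hφ.1 with hφ' | hφ'
    · exact .inl <| hφ'.mono fun _ => .inl
    · exact (ihψ hφ.2).imp (·.mono fun _ => .inr)
        fun hψ' => (hφ'.and hψ').mono fun _ h hs => hs.elim h.1 h.2

theorem finite_or_finite_diff_lang {φ : QF} (hφ : φ.fv = ∅) :
    (Lang φ).Finite ∨ ({n : ℕ | 1 ≤ n} \ Lang φ).Finite := by
  rcases eventually_sat_or_eventually_not_sat hφ (fun _ => 0) with h | h <;>
    rw [← Nat.cofinite_eq_atTop, eventually_cofinite] at h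
  · exact .inr <| h.subset fun n hn hs => hn.2 ⟨hn.1, hs⟩
  · exact .inl <| h.subset fun n hn => not_not.2 hn.2

def falsum : QF := .lastLt 0

def verum : QF := .or (.lastLt 1) (.lastGt 0)

def lastEq : ℕ → QF
  | 0 => .lastLt 1
  | j + 1 => .and (.lastLt (j + 2)) (.lastGt j)

def lastNe (j : ℕ) : QF := .or (.lastLt j) (.lastGt j)

@[simp] theorem fv_falsum : falsum.fv = ∅ := rfl

@[simp] theorem fv_verum : verum.fv = ∅ := rfl

@[simp] theorem fv_lastEq (j : ℕ) : (lastEq j).fv = ∅ := by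
  cases j <;> rfl

@[simp] theorem fv_lastNe (j : ℕ) : (lastNe j).fv = ∅ := rfl

theorem lang_falsum : Lang falsum = ∅ := by
  ext n
  simp only [Lang, falsum, Sat, Set.mem_ofPred_eq, Set.mem_empty_iff_false]
  grind

theorem lang_verum : Lang verum = {n | 1 ≤ n} := by
  ext n
  simp only [Lang, verum, Sat, Set.mem_ofPred_eq]
  omega

theorem sat_lastEq {n j : ℕ} (ν : ℕ → ℕ) : Sat n ν (lastEq j) ↔ n - 1 = j := by
  cases j <;> simp only [lastEq, Sat] <;> omega

theorem lang_or_lastEq (φ : QF) {a : ℕ} (ha : 1 ≤ a) :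
    Lang (.or φ (lastEq (a - 1))) = insert a (Lang φ) := by
  ext n
  simp only [Lang, Sat, sat_lastEq, Set.mem_ofPred_eq, Set.mem_insert_iff]
  grind

theorem lang_and_lastNe (φ : QF) {a : ℕ} (ha : 1 ≤ a) :
    Lang (.and φ (lastNe (a - 1))) = Lang φ \ {a} := by
  ext n
  simp only [Lang, lastNe, Sat, Set.mem_ofPred_eq, Set.mem_sdiff, Set.mem_singleton_iff]
  grind

theorem exists_lang_eq_of_finite {L : Set ℕ} (hL : L ⊆ {n | 1 ≤ n}) (hfin : L.Finite) :
    ∃ φ : QF, φ.fv = ∅ ∧ L = Lang φ := by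
  induction L, hfin using Set.Finite.induction_on with
  | empty => exact ⟨falsum, fv_falsum, lang_falsum.symm⟩
  | @insert a s _ _ ih =>
    obtain ⟨φ, hφ, rfl⟩ := ih ((Set.subset_insert a s).trans hL)
    exact ⟨.or φ (lastEq (a - 1)), by simp [fv, hφ],
      (lang_or_lastEq φ (hL (Set.mem_insert a _))).symm⟩

theorem exists_lang_eq_diff_of_finite {C : Set ℕ} (hC : C ⊆ {n | 1 ≤ n}) (hfin : C.Finite) :
    ∃ φ : QF, φ.fv = ∅ ∧ {n | 1 ≤ n} \ C = Lang φ := by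
  induction C, hfin using Set.Finite.induction_on with
  | empty => exact ⟨verum, fv_verum, by rw [Set.sdiff_empty, lang_verum]⟩
  | @insert a s _ _ ih =>
    obtain ⟨φ, hφ, hφs⟩ := ih ((Set.subset_insert a s).trans hC)
    refine ⟨.and φ (lastNe (a - 1)), by simp [fv, hφ], ?_⟩
    rw [lang_and_lastNe φ (hC (Set.mem_insert a _)), ← hφs, Set.sdiff_sdiff, Set.union_comm,
      Set.singleton_union]

end QF

/-- A language over the one-letter alphabet `{a}` (identifying
the nonempty string `aⁿ` with `n ≥ 1`) is QF-MFO-definable iff it is finite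
or co-finite (its complement within `{a}⁺` is finite). -/
theorem qfmfo_definable_iff_finite_or_cofinite (L : Set ℕ)
    (hL : L ⊆ {n : ℕ | 1 ≤ n}) :
    (∃ φ : QF, φ.fv = ∅ ∧ L = QF.Lang φ) ↔
    (L.Finite ∨ ({n : ℕ | 1 ≤ n} \ L).Finite) := by
  constructor
  · rintro ⟨φ, hφ, rfl⟩
    exact QF.finite_or_finite_diff_lang hφ
  · rintro (hfin | hcofin)
    · exact QF.exists_lang_eq_of_finite hL hfin
    · rw [← Set.sdiff_sdiff_cancel_left hL]
      exact QF.exists_lang_eq_diff_of_finite Set.sdiff_subset hcofin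
end

section
/- A language over a one-letter alphabet Σ = {a} is MFO-definable if, and only if, it is finite or co-finite (i.e., its complement within {a}⁺ is finite). -/
/-- Formulas of monadic first-order logic of order (MFO) over alphabet `α`.
First-order variables are represented by natural numbers. -/
inductive MFO (α : Type) : Type
  | char : α → ℕ → MFO α          -- `a(x)`
  | lt : ℕ → ℕ → MFO α            -- `x < y`
  | not : MFO α → MFO α           -- `¬ φ`
  | or : MFO α → MFO α → MFO α    -- `φ ∨ ψ`
  | ex : ℕ → MFO α → MFO α        -- `∃ x. φ`

namespace MFO

/-- Satisfaction of an MFO formula over a string `w` with assignment `ν`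
mapping variables to positions of `w`. -/
def Sat {α : Type} (w : List α) : (ℕ → ℕ) → MFO α → Prop
  | ν, .char a x => w[ν x]? = some a
  | ν, .lt x y => ν x < ν y
  | ν, .not φ => ¬ Sat w ν φ
  | ν, .or φ ψ => Sat w ν φ ∨ Sat w ν ψ
  | ν, .ex x φ => ∃ i < w.length, Sat w (Function.update ν x i) φ

/-- Free variables of an MFO formula. -/
def fv {α : Type} : MFO α → Finset ℕ
  | .char _ x => {x}
  | .lt x y => {x, y}
  | .not φ => fv φ
  | .or φ ψ => fv φ ∪ fv ψ
  | .ex x φ => fv φ \ {x}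

/-- The language of nonempty strings defined by an MFO formula
(intended to be used with sentences, whose satisfaction does not
depend on the assignment). -/
def Lang {α : Type} (φ : MFO α) : Set (List α) :=
  {w | w ≠ [] ∧ Sat w (fun _ => 0) φ}

/-- `φ₁ ∧ φ₂` as the abbreviation `¬(¬φ₁ ∨ ¬φ₂)`. -/
def and {α : Type} (φ ψ : MFO α) : MFO α := .not (.or (.not φ) (.not ψ))

/-- A language (of nonempty strings) is MFO-definable iff it is the language
of some MFO sentence (closed formula). -/
def Definable {α : Type} (L : Set (List α)) : Prop :=
  ∃ φ : MFO α, φ.fv = ∅ ∧ L = Lang φ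

end MFO

/-!
Over a one-letter alphabet, formulas of quantifier depth `k` cannot tell apart words of length
at least `2 ^ k` (an Ehrenfeucht–Fraïssé argument). The invariant compares two words with
variable assignments: the distances between matched landmarks (the two ends of the word and
the positions of the variables), truncated at `2 ^ k`, agree. A new position `i` in one word is
matched in the other by copying its distance to the nearest landmark on its left or on its
right when that distance is below `2 ^ (k - 1)`, and is otherwise placed `2 ^ (k - 1)` to the
right of the left one. Hence a definable language contains either all long words or none.

Conversely `k < |w|` is definable by a chain of `k + 1` nested quantifiers, and definable
languages are closed under union, difference and complement, so every finite or co-finite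
language of nonempty words is definable.
-/

namespace MFO

variable {α : Type}

def qdepth : MFO α → ℕ
  | .char _ _ => 0
  | .lt _ _ => 0
  | .not φ => qdepth φ
  | .or φ ψ => max (qdepth φ) (qdepth ψ)
  | .ex _ φ => qdepth φ + 1

section Closure

variable {L L₁ L₂ : Set (List α)}

theorem lang_not (φ : MFO α) : Lang (.not φ) = {w | w ≠ []} \ Lang φ := by
  ext w
  simp only [Lang, Sat, Set.mem_sdiff, Set.mem_ofPred_eq]
  tauto

theorem lang_or (φ ψ : MFO α) : Lang (.or φ ψ) = Lang φ ∪ Lang ψ := by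
  ext w
  simp only [Lang, Sat, Set.mem_union, Set.mem_ofPred_eq]
  tauto

theorem lang_and_not (φ ψ : MFO α) : Lang (φ.and (.not ψ)) = Lang φ \ Lang ψ := by
  ext w
  simp only [Lang, MFO.and, Sat, Set.mem_sdiff, Set.mem_ofPred_eq]
  tauto

theorem Definable.compl (h : Definable L) : Definable ({w | w ≠ []} \ L) := by
  obtain ⟨φ, hφ, rfl⟩ := h
  exact ⟨.not φ, hφ, (lang_not φ).symm⟩

theorem Definable.union (h₁ : Definable L₁) (h₂ : Definable L₂) : Definable (L₁ ∪ L₂) := by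
  obtain ⟨φ, hφ, rfl⟩ := h₁
  obtain ⟨ψ, hψ, rfl⟩ := h₂
  exact ⟨.or φ ψ, by simp [fv, hφ, hψ], (lang_or φ ψ).symm⟩

theorem Definable.diff (h₁ : Definable L₁) (h₂ : Definable L₂) : Definable (L₁ \ L₂) := by
  obtain ⟨φ, hφ, rfl⟩ := h₁
  obtain ⟨ψ, hψ, rfl⟩ := h₂
  exact ⟨φ.and (.not ψ), by simp [MFO.and, fv, hφ, hψ], (lang_and_not φ ψ).symm⟩

end Closure

-- A descending chain below `v`, witnessed by the fresh variables `v + 1, …, v + k`.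
def varGe : ℕ → ℕ → MFO α
  | v, 0 => .not (.lt v v)
  | v, k + 1 => .ex (v + 1) ((MFO.lt (v + 1) v).and (varGe (v + 1) k))

theorem fv_varGe (v k : ℕ) : (varGe v k : MFO α).fv ⊆ {v} := by
  induction k generalizing v with
  | zero => simp [varGe, fv]
  | succ k ih =>
    intro x hx
    have := @ih (v + 1) x
    simp only [varGe, MFO.and, fv, Finset.mem_sdiff, Finset.mem_union, Finset.mem_insert,
      Finset.mem_singleton] at hx this ⊢
    tauto

theorem sat_varGe {w : List α} (v k : ℕ) {ν : ℕ → ℕ} (hv : ν v < w.length) :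
    Sat w ν (varGe v k) ↔ k ≤ ν v := by
  induction k generalizing v ν with
  | zero => simp [varGe, Sat]
  | succ k ih =>
    have hne : v ≠ v + 1 := (Nat.lt_succ_self v).ne
    simp only [varGe, MFO.and, Sat, not_or, not_not, Function.update_self,
      Function.update_of_ne hne]
    constructor
    · rintro ⟨i, hi, hiv, hk⟩
      rw [ih (v + 1) (by simpa using hi), Function.update_self] at hk
      omega
    · intro hk
      refine ⟨ν v - 1, by omega, by omega, ?_⟩
      rw [ih (v + 1) (by simp; omega), Function.update_self]
      omega

def lengthGt (k : ℕ) : MFO α := .ex 0 (varGe 0 k)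

theorem fv_lengthGt (k : ℕ) : (lengthGt k : MFO α).fv = ∅ :=
  Finset.sdiff_eq_empty_iff_subset.mpr (fv_varGe 0 k)

theorem lang_lengthGt (k : ℕ) : Lang (lengthGt k : MFO α) = {w | k < w.length} := by
  ext w
  simp only [Lang, lengthGt, Sat, Set.mem_ofPred_eq]
  constructor
  · rintro ⟨-, i, hi, hk⟩
    rw [sat_varGe 0 k (by simpa using hi), Function.update_self] at hk
    omega
  · intro hk
    refine ⟨List.ne_nil_of_length_pos (by omega), k, hk, ?_⟩
    rw [sat_varGe 0 k (by simpa using hk), Function.update_self]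

theorem definable_length_gt (k : ℕ) : Definable {w : List α | k < w.length} :=
  ⟨lengthGt k, fv_lengthGt k, (lang_lengthGt k).symm⟩

theorem definable_empty : Definable (∅ : Set (List α)) := by
  simpa using (definable_length_gt 0).diff (definable_length_gt (α := α) 0)

theorem definable_of_finite {L : Set (List α)} (hL : L.Finite)
    (h : ∀ w ∈ L, Definable {w}) : Definable L := by
  induction L, hL using Set.Finite.induction_on with
  | empty => exact definable_empty
  | @insert w L _ _ ih =>
    rw [Set.insert_eq]
    exact (h w (Set.mem_insert w L)).union (ih fun u hu => h u (Set.mem_insert_of_mem w hu))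

theorem definable_singleton [Subsingleton α] {w : List α} (hw : w ≠ []) : Definable {w} := by
  convert (definable_length_gt (w.length - 1)).diff (definable_length_gt w.length) using 1
  ext u
  have hpos := List.length_pos_iff.mpr hw
  simp only [Set.mem_singleton_iff, ← List.length_injective.eq_iff, Set.mem_sdiff,
    Set.mem_ofPred_eq]
  omega

def Matched (n m : ℕ) (ν μ : ℕ → ℕ) (p p' : ℕ) : Prop :=
  (p = 0 ∧ p' = 0) ∨ (p = n ∧ p' = m) ∨ ∃ z, p = ν z ∧ p' = μ z

def GapEquiv (t n m : ℕ) (ν μ : ℕ → ℕ) : Prop :=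
  ∀ p p' q q', Matched n m ν μ p p' → Matched n m ν μ q q' → min t (q - p) = min t (q' - p')

section GapEquiv

variable {s t n m i j x p p' q q' : ℕ} {ν μ : ℕ → ℕ}

theorem Matched.symm (h : Matched n m ν μ p p') : Matched m n μ ν p' p := by
  rcases h with ⟨rfl, rfl⟩ | ⟨rfl, rfl⟩ | ⟨z, rfl, rfl⟩
  exacts [Or.inl ⟨rfl, rfl⟩, Or.inr (Or.inl ⟨rfl, rfl⟩), Or.inr (Or.inr ⟨z, rfl, rfl⟩)]

theorem Matched.of_update (h : Matched n m (Function.update ν x i) (Function.update μ x j) p p') :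
    Matched n m ν μ p p' ∨ (p = i ∧ p' = j) := by
  rcases h with h | h | ⟨z, rfl, rfl⟩
  · exact Or.inl (Or.inl h)
  · exact Or.inl (Or.inr (Or.inl h))
  rcases eq_or_ne z x with rfl | hz
  · simp
  · simp only [Function.update_of_ne hz]
    exact Or.inl (Or.inr (Or.inr ⟨z, rfl, rfl⟩))

theorem GapEquiv.symm (h : GapEquiv t n m ν μ) : GapEquiv t m n μ ν :=
  fun _ _ _ _ hp hq => (h _ _ _ _ hp.symm hq.symm).symm

theorem GapEquiv.mono (h : GapEquiv t n m ν μ) (hst : s ≤ t) : GapEquiv s n m ν μ := by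
  intro p p' q q' hp hq
  have := h p p' q q' hp hq
  omega

theorem GapEquiv.lt_iff (h : GapEquiv t n m ν μ) (ht : 1 ≤ t) (hp : Matched n m ν μ p p')
    (hq : Matched n m ν μ q q') : p < q ↔ p' < q' := by
  have := h p p' q q' hp hq
  omega

theorem gapEquiv_const (hn : t ≤ n) (hm : t ≤ m) : GapEquiv t n m (fun _ => 0) (fun _ => 0) := by
  intro p p' q q' hp hq
  simp only [Matched, exists_const] at hp hq
  omega

theorem GapEquiv.update (h : GapEquiv t n m ν μ)
    (hij : ∀ p p', Matched n m ν μ p p' →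
      min t (i - p) = min t (j - p') ∧ min t (p - i) = min t (p' - j))
    (x : ℕ) : GapEquiv t n m (Function.update ν x i) (Function.update μ x j) := by
  intro p p' q q' hp hq
  rcases hp.of_update with hp₀ | ⟨rfl, rfl⟩ <;> rcases hq.of_update with hq₀ | ⟨rfl, rfl⟩
  · exact h p p' q q' hp₀ hq₀
  · exact (hij p p' hp₀).1
  · exact (hij q q' hq₀).2
  · simp

/-- `a ≤ i ≤ b` are the landmarks next to `i`: `j` copies the distance from `i` to `a` or to `b`
when it is below `s`, and otherwise lies `s` to the right of `a'`. -/
theorem exists_matching_point {a a' b b' : ℕ} (hs : 1 ≤ s) (hts : 2 * s ≤ t) (hai : a ≤ i)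
    (hib : i ≤ b) (hab : min t (b - a) = min t (b' - a')) :
    ∃ j, ∀ p p' : ℕ, (p ≤ a ∨ b ≤ p) →
      min t (a - p) = min t (a' - p') → min t (p - a) = min t (p' - a') →
      min t (b - p) = min t (b' - p') → min t (p - b) = min t (p' - b') →
      min s (i - p) = min s (j - p') ∧ min s (p - i) = min s (p' - j) := by
  by_cases hnear_a : i - a < s
  · refine ⟨a' + (i - a), fun p p' hp hpa hap hpb hbp => ?_⟩
    clear hpb hbp hab
    omega
  by_cases hnear_b : b - i < s
  · have hb' : b - i ≤ b' := by omega
    refine ⟨b' - (b - i), fun p p' hp hpa hap hpb hbp => ?_⟩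
    clear hpa hap hab
    omega
  · refine ⟨a' + s, fun p p' hp hpa hap hpb hbp => ?_⟩
    clear hpb hbp hab
    omega

theorem GapEquiv.exists_matching (h : GapEquiv t n m ν μ) (hs : 1 ≤ s) (hts : 2 * s ≤ t)
    (hi : i ≤ n) : ∃ j, ∀ p p', Matched n m ν μ p p' →
      min s (i - p) = min s (j - p') ∧ min s (p - i) = min s (p' - j) := by
  classical
  let IsLandmark v := ∃ v', Matched n m ν μ v v'
  have hright : ∃ v, i ≤ v ∧ IsLandmark v := ⟨n, hi, m, Or.inr (Or.inl ⟨rfl, rfl⟩)⟩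
  obtain ⟨a', ha'⟩ : IsLandmark (Nat.findGreatest IsLandmark i) :=
    Nat.findGreatest_spec (Nat.zero_le i) ⟨0, Or.inl ⟨rfl, rfl⟩⟩
  obtain ⟨hib, b', hb'⟩ := Nat.find_spec hright
  obtain ⟨j, hj⟩ := exists_matching_point hs hts (Nat.findGreatest_le i) hib (h _ _ _ _ ha' hb')
  refine ⟨j, fun p p' hp => hj p p' ?_ (h _ _ _ _ hp ha') (h _ _ _ _ ha' hp) (h _ _ _ _ hp hb')
    (h _ _ _ _ hb' hp)⟩
  rcases le_total p i with hpi | hip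
  · exact Or.inl (Nat.le_findGreatest hpi ⟨p', hp⟩)
  · exact Or.inr (Nat.find_min' hright ⟨hip, p', hp⟩)

end GapEquiv

theorem sat_replicate_iff_of_gapEquiv (c : α) {φ : MFO α} {n m : ℕ} {ν μ : ℕ → ℕ}
    (h : GapEquiv (2 ^ φ.qdepth) n m ν μ) :
    Sat (List.replicate n c) ν φ ↔ Sat (List.replicate m c) μ φ := by
  induction φ generalizing n m ν μ with
  | char d x =>
    have hx : ν x < n ↔ μ x < m :=
      h.lt_iff le_rfl (Or.inr (Or.inr ⟨x, rfl, rfl⟩)) (Or.inr (Or.inl ⟨rfl, rfl⟩))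
    simp only [Sat, List.getElem?_replicate]
    split_ifs <;> simp_all
  | lt x y =>
    exact h.lt_iff le_rfl (Or.inr (Or.inr ⟨x, rfl, rfl⟩)) (Or.inr (Or.inr ⟨y, rfl, rfl⟩))
  | not φ ih =>
    exact (ih h).not
  | or φ ψ ihφ ihψ =>
    exact or_congr (ihφ (h.mono (Nat.pow_le_pow_right two_pos (le_max_left _ _))))
      (ihψ (h.mono (Nat.pow_le_pow_right two_pos (le_max_right _ _))))
  | ex x φ ih =>
    have extend : ∀ {n m ν μ}, GapEquiv (2 ^ (φ.qdepth + 1)) n m ν μ →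
        Sat (List.replicate n c) ν (.ex x φ) → Sat (List.replicate m c) μ (.ex x φ) := by
      rintro n m ν μ h' ⟨i, hi, hsat⟩
      rw [List.length_replicate] at hi
      have hts : 2 * 2 ^ φ.qdepth ≤ 2 ^ (φ.qdepth + 1) := by rw [pow_succ, mul_comm]
      have hs : 1 ≤ 2 ^ φ.qdepth := Nat.one_le_two_pow
      obtain ⟨j, hj⟩ := h'.exists_matching hs hts hi.le
      have hjm := (hj n m (Or.inr (Or.inl ⟨rfl, rfl⟩))).2
      refine ⟨j, by rw [List.length_replicate]; omega, ?_⟩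
      exact (ih ((h'.mono (by omega)).update hj x)).mp hsat
    exact ⟨extend h, extend h.symm⟩

theorem sat_replicate_iff_of_le (c : α) (φ : MFO α) {n m : ℕ} (hn : 2 ^ φ.qdepth ≤ n)
    (hm : 2 ^ φ.qdepth ≤ m) :
    Sat (List.replicate n c) (fun _ => 0) φ ↔ Sat (List.replicate m c) (fun _ => 0) φ :=
  sat_replicate_iff_of_gapEquiv c (gapEquiv_const hn hm)

theorem lang_finite_or_cofinite (φ : MFO Unit) :
    (Lang φ).Finite ∨ ({w : List Unit | w ≠ []} \ Lang φ).Finite := by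
  have hlong : ∀ w : List Unit, 2 ^ φ.qdepth ≤ w.length →
      (w ∈ Lang φ ↔ Sat (List.replicate (2 ^ φ.qdepth) ()) (fun _ => 0) φ) := by
    intro w hw
    have hne : w ≠ [] := List.ne_nil_of_length_pos (lt_of_lt_of_le (Nat.two_pow_pos _) hw)
    have hrep : w = List.replicate w.length () := List.length_injective (by simp)
    change w ≠ [] ∧ _ ↔ _
    rw [and_iff_right hne, hrep]
    exact sat_replicate_iff_of_le () φ hw le_rfl
  by_cases hsat : Sat (List.replicate (2 ^ φ.qdepth) ()) (fun _ => 0) φ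
  · refine Or.inr ((List.finite_length_lt Unit (2 ^ φ.qdepth)).subset fun w hw => ?_)
    by_contra hlen
    exact hw.2 ((hlong w (not_lt.mp hlen)).mpr hsat)
  · refine Or.inl ((List.finite_length_lt Unit (2 ^ φ.qdepth)).subset fun w hw => ?_)
    by_contra hlen
    exact hsat ((hlong w (not_lt.mp hlen)).mp hw)

end MFO

/-- A language over the one-letter alphabet `{a}` (modeled by
`Unit`) is MFO-definable iff it is finite or co-finite (its complement within
`{a}⁺` is finite). -/
theorem mfo_definable_iff_finite_or_cofinite (L : Set (List Unit))
    (hL : L ⊆ {w : List Unit | w ≠ []}) :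
    MFO.Definable L ↔ (L.Finite ∨ ({w : List Unit | w ≠ []} \ L).Finite) := by
  constructor
  · rintro ⟨φ, -, rfl⟩
    exact MFO.lang_finite_or_cofinite φ
  · rintro (hfin | hcofin)
    · exact MFO.definable_of_finite hfin fun w hw => MFO.definable_singleton (hL hw)
    · have hcompl :=
        (MFO.definable_of_finite hcofin fun w hw => MFO.definable_singleton hw.1).compl
      rwa [Set.sdiff_sdiff_cancel_left hL] at hcompl
end

section
/- For every MFO sentence φ over a finite alphabet Σ there exists a finite-state automaton A over Σ such that L(φ) = L(A); in particular, every MFO-definable language is regular. -/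
/-! The Büchi–Elgot–Trakhtenbrot construction. A formula is compiled into a language over the
extended alphabet `α × (ℕ → Bool)`: each letter carries one Boolean track per variable, and a word
assigns to `x` the first position marked on track `x`. An atomic formula then says that the first
letter marked on some tracks has a given property, which a three-state automaton checks; negation
and disjunction are complement and union; and a word satisfies `∃ x φ` iff some way of re-marking
track `x` (with at least one mark) yields a word of `φ`, so its language is the preimage of an
image under the letter map erasing track `x`, regular by the subset construction. Mathlib's
automata need no finite alphabet, so all tracks can be carried at once. A sentence does not depend
on the assignment, so its language is read off the words whose tracks are all empty. -/

theorem List.findIdx_lt_findIdx_iff {α : Type*} (l : List α) (p q : α → Bool) :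
    l.findIdx p < l.findIdx q ↔ ∃ a ∈ l.find? (fun a => p a || q a), q a = false := by
  induction l with
  | nil => simp
  | cons a l ih => cases hp : p a <;> cases hq : q a <;> simp [List.findIdx_cons, hp, hq, ih]

namespace DFA

variable {α β : Type*} {σ : Type}

def firstMatch (p q : α → Bool) : DFA α (Option Bool) where
  step s a := s.or (if p a then some (q a) else none)
  start := none
  accept := {some true}

theorem evalFrom_firstMatch (p q : α → Bool) (s : Option Bool) (u : List α) :
    (firstMatch p q).evalFrom s u = s.or ((u.find? p).map q) := by
  induction u generalizing s with
  | nil => simp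
  | cons a u ih =>
    rw [evalFrom_cons, ih]
    cases s <;> cases h : p a <;> simp [firstMatch, h]

theorem accepts_firstMatch (p q : α → Bool) :
    (firstMatch p q).accepts = {u : List α | ∃ a ∈ u.find? p, q a} := by
  ext u
  rw [mem_accepts, eval, evalFrom_firstMatch]
  simp [firstMatch]
  rfl

def imageNFA (M : DFA α σ) (f : α → β) : NFA β σ where
  step s b := {t | ∃ a, f a = b ∧ M.step s a = t}
  start := {M.start}
  accept := M.accept

theorem mem_evalFrom_imageNFA (M : DFA α σ) (f : α → β) (S : Set σ) (w : List β) (t : σ) :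
    t ∈ (M.imageNFA f).evalFrom S w ↔ ∃ s ∈ S, ∃ u, u.map f = w ∧ M.evalFrom s u = t := by
  induction w generalizing S with
  | nil => simp
  | cons b w ih =>
    simp only [NFA.evalFrom_cons, ih, NFA.mem_stepSet, List.map_eq_cons_iff]
    constructor
    · rintro ⟨_, ⟨s, hs, a, rfl, rfl⟩, u, rfl, rfl⟩
      exact ⟨s, hs, a :: u, ⟨a, u, rfl, rfl, rfl⟩, rfl⟩
    · rintro ⟨s, hs, _, ⟨a, u, rfl, rfl, rfl⟩, rfl⟩
      exact ⟨_, ⟨s, hs, a, rfl, rfl⟩, u, rfl, rfl⟩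

theorem accepts_imageNFA (M : DFA α σ) (f : α → β) :
    (M.imageNFA f).accepts = Language.map f M.accepts := by
  ext w
  simp only [NFA.mem_accepts, mem_evalFrom_imageNFA]
  constructor
  · rintro ⟨t, ht, _, rfl, u, rfl, rfl⟩
    exact ⟨u, ht, rfl⟩
  · rintro ⟨u, hu, rfl⟩
    exact ⟨_, hu, M.start, rfl, u, rfl, rfl⟩

end DFA

namespace Language

variable {α β : Type*}

theorem isRegular_setOf_find? (p : α → Bool) (q : α → Prop) :
    IsRegular {u : List α | ∃ a ∈ u.find? p, q a} := by
  classical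
  exact ⟨_, inferInstance, DFA.firstMatch p (fun a => decide (q a)), by
    simp [DFA.accepts_firstMatch]; rfl⟩

theorem isRegular_setOf_exists_mem (p : α → Bool) :
    IsRegular {u : List α | ∃ a ∈ u, p a} := by
  convert isRegular_setOf_find? p fun _ => True using 3
  simp [← List.find?_isSome, Option.isSome_iff_exists]

theorem IsRegular.preimage_map (f : α → β) {L : Language β} (h : L.IsRegular) :
    IsRegular (List.map f ⁻¹' L) := by
  obtain ⟨σ, _, M, rfl⟩ := h
  exact ⟨σ, inferInstance, M.comap f, M.accepts_comap f⟩

theorem IsRegular.map (f : α → β) {L : Language α} (h : L.IsRegular) :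
    (map f L).IsRegular := by
  obtain ⟨σ, _, M, rfl⟩ := h
  exact ⟨Set σ, Fintype.ofFinite _, (M.imageNFA f).toDFA, by
    rw [NFA.toDFA_correct, DFA.accepts_imageNFA]⟩

end Language

namespace MFO

variable {α : Type}

theorem sat_congr {w : List α} {φ : MFO α} {ν ν' : ℕ → ℕ} (h : ∀ x ∈ φ.fv, ν x = ν' x) :
    Sat w ν φ ↔ Sat w ν' φ := by
  induction φ generalizing ν ν' with
  | char a x => simp [Sat, h x (by simp [fv])]
  | lt x y => simp [Sat, h x (by simp [fv]), h y (by simp [fv])]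
  | not φ ih => exact not_congr (ih h)
  | or φ ψ ihφ ihψ =>
    exact or_congr (ihφ fun x hx => h x (by simp [fv, hx]))
      (ihψ fun x hx => h x (by simp [fv, hx]))
  | ex x φ ih =>
    refine exists_congr fun i => and_congr_right fun _ => ih fun y hy => ?_
    by_cases hyx : y = x
    · simp [hyx]
    · simpa [hyx] using h y (by simp [fv, hy, hyx])

-- `u.length` when track `x` is empty, so the tracks need no well-formedness condition.
def firstMark (u : List (α × (ℕ → Bool))) (x : ℕ) : ℕ := u.findIdx (·.2 x)

def trackLang (φ : MFO α) : Language (α × (ℕ → Bool)) :=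
  {u : List _ | Sat (u.map Prod.fst) (firstMark u) φ}

def clearTrack (x : ℕ) (b : α × (ℕ → Bool)) : α × (ℕ → Bool) :=
  (b.1, Function.update b.2 x false)

def markOnly (x i : ℕ) (u : List (α × (ℕ → Bool))) : List (α × (ℕ → Bool)) :=
  u.mapIdx fun j b => (b.1, Function.update b.2 x (decide (j = i)))

section tracks

variable {u v : List (α × (ℕ → Bool))} {x : ℕ}

theorem map_fst_eq_of_map_clearTrack_eq (h : v.map (clearTrack x) = u.map (clearTrack x)) :
    v.map Prod.fst = u.map Prod.fst := by
  have := congrArg (List.map Prod.fst) h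
  simpa [Function.comp_def, clearTrack] using this

theorem firstMark_eq_update_of_map_clearTrack_eq
    (h : v.map (clearTrack x) = u.map (clearTrack x)) :
    firstMark v = Function.update (firstMark u) x (firstMark v x) := by
  funext y
  by_cases hyx : y = x
  · simp [hyx]
  · have := congrArg (List.findIdx (·.2 y)) h
    simpa [firstMark, Function.comp_def, clearTrack, hyx] using this

theorem map_clearTrack_markOnly (i : ℕ) :
    (markOnly x i u).map (clearTrack x) = u.map (clearTrack x) := by
  refine List.ext_getElem (by simp [markOnly]) fun j _ _ => ?_
  simp [markOnly, clearTrack]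

theorem firstMark_markOnly_self {i : ℕ} (hi : i < u.length) :
    firstMark (markOnly x i u) x = i := by
  rw [firstMark, List.findIdx_eq (by simpa [markOnly] using hi)]
  simp [markOnly]
  omega

theorem firstMark_markOnly {i : ℕ} (hi : i < u.length) :
    firstMark (markOnly x i u) = Function.update (firstMark u) x i := by
  rw [firstMark_eq_update_of_map_clearTrack_eq (map_clearTrack_markOnly i),
    firstMark_markOnly_self hi]

end tracks

theorem trackLang_char (a : α) (x : ℕ) :
    trackLang (char a x) = {u : List _ | ∃ b ∈ u.find? (·.2 x), b.1 = a} := by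
  ext u
  simp [trackLang, Sat, firstMark, List.getElem?_map, ← List.find?_eq_getElem?_findIdx]

theorem trackLang_lt (x y : ℕ) :
    trackLang (lt x y : MFO α) =
      {u : List _ | ∃ b ∈ u.find? (fun b => b.2 x || b.2 y), b.2 y = false} := by
  ext u
  exact List.findIdx_lt_findIdx_iff u _ _

theorem trackLang_not (φ : MFO α) : trackLang (not φ) = (trackLang φ)ᶜ := rfl

theorem trackLang_or (φ ψ : MFO α) : trackLang (or φ ψ) = trackLang φ + trackLang ψ := rfl

theorem trackLang_ex (x : ℕ) (φ : MFO α) :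
    trackLang (ex x φ) = List.map (clearTrack x) ⁻¹'
      Language.map (clearTrack x) (trackLang φ ⊓ {u : List _ | ∃ b ∈ u, b.2 x}) := by
  ext u
  constructor
  · rintro ⟨i, hi, hsat⟩
    rw [List.length_map] at hi
    have hclear := map_clearTrack_markOnly (x := x) i (u := u)
    refine ⟨markOnly x i u, ⟨?_, ?_⟩, hclear⟩
    · show Sat _ _ φ
      rwa [map_fst_eq_of_map_clearTrack_eq hclear, firstMark_markOnly hi]
    · refine List.findIdx_lt_length.mp ?_
      rw [← firstMark, firstMark_markOnly_self hi]
      simpa [markOnly] using hi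
  · rintro ⟨v, ⟨hsat, hmark⟩, hclear⟩
    have hlen : v.length = u.length := by simpa using congrArg List.length hclear
    refine ⟨firstMark v x, ?_, ?_⟩
    · simpa [hlen, firstMark] using List.findIdx_lt_length.mpr hmark
    · rwa [← map_fst_eq_of_map_clearTrack_eq hclear,
        ← firstMark_eq_update_of_map_clearTrack_eq hclear]

theorem isRegular_trackLang (φ : MFO α) : (trackLang φ).IsRegular := by
  induction φ with
  | char a x => rw [trackLang_char]; exact Language.isRegular_setOf_find? _ _
  | lt x y => rw [trackLang_lt]; exact Language.isRegular_setOf_find? _ _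
  | not φ ih => rw [trackLang_not]; exact ih.compl
  | or φ ψ ihφ ihψ => rw [trackLang_or]; exact ihφ.add ihψ
  | ex x φ ih =>
    rw [trackLang_ex]
    exact ((ih.inf (Language.isRegular_setOf_exists_mem _)).map _).preimage_map _

theorem lang_eq_of_fv_eq_empty {φ : MFO α} (h : φ.fv = ∅) :
    Lang φ = {w : List α | ∃ _ ∈ w, true} ∩
      List.map (fun a => (a, fun _ : ℕ => false)) ⁻¹' trackLang φ := by
  ext w
  have hfst : (w.map fun a => (a, fun _ : ℕ => false)).map Prod.fst = w := by
    simp [Function.comp_def]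
  have hsat : Sat w (fun _ => 0) φ ↔
      Sat w (firstMark (w.map fun a => (a, fun _ : ℕ => false))) φ :=
    sat_congr (by simp [h])
  show w ≠ [] ∧ Sat w _ φ ↔ (∃ _ ∈ w, true) ∧ Sat _ (firstMark _) φ
  rw [hfst, ← hsat]
  simp [List.eq_nil_iff_forall_not_mem]

theorem isRegular_lang {φ : MFO α} (h : φ.fv = ∅) : Language.IsRegular (Lang φ) := by
  rw [lang_eq_of_fv_eq_empty h]
  exact (Language.isRegular_setOf_exists_mem _).inf ((isRegular_trackLang φ).preimage_map _)

end MFO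

theorem mfo_to_dfa_general {α : Type} :
    (∀ φ : MFO α, φ.fv = ∅ →
      ∃ (σ : Type) (_ : Fintype σ) (A : DFA α σ), MFO.Lang φ = A.accepts) ∧
    (∀ L : Set (List α), MFO.Definable L →
      ∃ (σ : Type) (_ : Fintype σ) (A : DFA α σ), L = A.accepts) := by
  have sentence (φ : MFO α) (h : φ.fv = ∅) :
      ∃ (σ : Type) (_ : Fintype σ) (A : DFA α σ), MFO.Lang φ = A.accepts := by
    obtain ⟨σ, _, A, hA⟩ := MFO.isRegular_lang h
    exact ⟨σ, inferInstance, A, hA.symm⟩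
  refine ⟨sentence, ?_⟩
  rintro L ⟨φ, h, rfl⟩
  exact sentence φ h

/-- For every MFO sentence `φ` over a finite alphabet there is a
finite-state (deterministic) automaton `A` with `L(φ) = L(A)`; in particular,
every MFO-definable language is regular. -/
theorem mfo_to_dfa {α : Type} [Fintype α] :
    (∀ φ : MFO α, φ.fv = ∅ →
      ∃ (σ : Type) (_ : Fintype σ) (A : DFA α σ), MFO.Lang φ = A.accepts) ∧
    (∀ L : Set (List α), MFO.Definable L →
      ∃ (σ : Type) (_ : Fintype σ) (A : DFA α σ), L = A.accepts) :=
  mfo_to_dfa_general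
end

section
/- The MSO logic is strictly more expressive than the MFO logic: every MFO-definable language is MSO-definable, and there exists an MSO-definable language (namely L_even = { a^(2n) | n ≥ 1 } over the one-letter alphabet {a}) that is not MFO-definable. -/
/-- Formulas of monadic second-order logic of order (MSO) over alphabet `α`.
First-order and second-order (set) variables are represented by naturals. -/
inductive MSO (α : Type) : Type
  | char : α → ℕ → MSO α          -- `a(x)`
  | mem : ℕ → ℕ → MSO α           -- `X(x)` : `mem X x`
  | lt : ℕ → ℕ → MSO α            -- `x < y`
  | not : MSO α → MSO α
  | or : MSO α → MSO α → MSO α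
  | ex1 : ℕ → MSO α → MSO α       -- `∃ x. φ`
  | ex2 : ℕ → MSO α → MSO α       -- `∃ X. φ`

namespace MSO

/-- Satisfaction of an MSO formula over a string `w` with first-order
assignment `ν₁` (positions) and second-order assignment `ν₂` (sets of positions). -/
def Sat {α : Type} (w : List α) : (ℕ → ℕ) → (ℕ → Set ℕ) → MSO α → Prop
  | ν₁, _, .char a x => w[ν₁ x]? = some a
  | ν₁, ν₂, .mem X x => ν₁ x ∈ ν₂ X
  | ν₁, _, .lt x y => ν₁ x < ν₁ y
  | ν₁, ν₂, .not φ => ¬ Sat w ν₁ ν₂ φ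
  | ν₁, ν₂, .or φ ψ => Sat w ν₁ ν₂ φ ∨ Sat w ν₁ ν₂ ψ
  | ν₁, ν₂, .ex1 x φ => ∃ i < w.length, Sat w (Function.update ν₁ x i) ν₂ φ
  | ν₁, ν₂, .ex2 X φ =>
      ∃ S : Set ℕ, (∀ i ∈ S, i < w.length) ∧ Sat w ν₁ (Function.update ν₂ X S) φ

/-- Free first-order variables of an MSO formula. -/
def fv1 {α : Type} : MSO α → Finset ℕ
  | .char _ x => {x}
  | .mem _ x => {x}
  | .lt x y => {x, y}
  | .not φ => fv1 φ
  | .or φ ψ => fv1 φ ∪ fv1 ψ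
  | .ex1 x φ => fv1 φ \ {x}
  | .ex2 _ φ => fv1 φ

/-- Free second-order variables of an MSO formula. -/
def fv2 {α : Type} : MSO α → Finset ℕ
  | .char _ _ => ∅
  | .mem X _ => {X}
  | .lt _ _ => ∅
  | .not φ => fv2 φ
  | .or φ ψ => fv2 φ ∪ fv2 ψ
  | .ex1 _ φ => fv2 φ
  | .ex2 X φ => fv2 φ \ {X}

/-- The language of nonempty strings defined by an MSO formula
(intended to be used with sentences). -/
def Lang {α : Type} (φ : MSO α) : Set (List α) :=
  {w | w ≠ [] ∧ Sat w (fun _ => 0) (fun _ => ∅) φ}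

/-- A language (of nonempty strings) is MSO-definable iff it is the language
of some MSO sentence (closed formula). -/
def Definable {α : Type} (L : Set (List α)) : Prop :=
  ∃ φ : MSO α, φ.fv1 = ∅ ∧ φ.fv2 = ∅ ∧ L = Lang φ

end MSO

/-- `L_even = { a^(2n) | n ≥ 1 }`: nonempty strings of even length over the
one-letter alphabet (modeled by `Unit`). -/
def Leven : Set (List Unit) := {w | w ≠ [] ∧ Even w.length}

namespace MFO

variable {α : Type}

def toMSO : MFO α → MSO α
  | .char a x => .char a x
  | .lt x y => .lt x y
  | .not φ => .not (toMSO φ)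
  | .or φ ψ => .or (toMSO φ) (toMSO ψ)
  | .ex x φ => .ex1 x (toMSO φ)

@[simp] theorem fv1_toMSO (φ : MFO α) : φ.toMSO.fv1 = φ.fv := by
  induction φ <;> simp [toMSO, MSO.fv1, fv, *]

@[simp] theorem fv2_toMSO (φ : MFO α) : φ.toMSO.fv2 = ∅ := by
  induction φ <;> simp [toMSO, MSO.fv2, *]

@[simp] theorem sat_toMSO (φ : MFO α) (w : List α) (ν₁ : ℕ → ℕ) (ν₂ : ℕ → Set ℕ) :
    MSO.Sat w ν₁ ν₂ φ.toMSO ↔ Sat w ν₁ φ := by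
  induction φ generalizing ν₁ <;> simp [toMSO, MSO.Sat, Sat, *]

theorem Definable.toMSO {L : Set (List α)} (h : Definable L) : MSO.Definable L := by
  obtain ⟨φ, hfv, rfl⟩ := h
  exact ⟨φ.toMSO, by simp [hfv], fv2_toMSO φ, by ext; simp [Lang, MSO.Lang]⟩

end MFO

theorem mem_iff_even_of_alternating {S : Set ℕ} {n : ℕ} (h0 : 0 ∈ S)
    (hstep : ∀ i, i + 1 < n → ¬(i ∈ S ↔ i + 1 ∈ S)) : ∀ i < n, (i ∈ S ↔ Even i) := by
  intro i hi
  induction i with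
  | zero => simpa using h0
  | succ i ih =>
    have := hstep i hi
    have := ih (by omega)
    rw [Nat.even_add_one]
    tauto

namespace MSO

def and {α : Type} (φ ψ : MSO α) : MSO α := .not (.or (.not φ) (.not ψ))
def imp {α : Type} (φ ψ : MSO α) : MSO α := .or (.not φ) ψ
def iff {α : Type} (φ ψ : MSO α) : MSO α := and (imp φ ψ) (imp ψ φ)
def all1 {α : Type} (x : ℕ) (φ : MSO α) : MSO α := .not (.ex1 x (.not φ))

def isFirst {α : Type} : MSO α := .not (.ex1 1 (.lt 1 0))
def isLast {α : Type} : MSO α := .not (.ex1 1 (.lt 0 1))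
def isSucc {α : Type} : MSO α := and (.lt 0 1) (.not (.ex1 2 (and (.lt 0 2) (.lt 2 1))))

/-- The set variable `0` contains the first position, alternates along the successor relation
and misses the last position. -/
def evenSentence {α : Type} : MSO α :=
  .ex2 0 (and (all1 0 (imp isFirst (.mem 0 0)))
    (and (all1 0 (all1 1 (imp isSucc (.not (iff (.mem 0 0) (.mem 0 1))))))
      (all1 0 (imp isLast (.not (.mem 0 0))))))

section Semantics

variable {α : Type} {w : List α} {ν₁ : ℕ → ℕ} {ν₂ : ℕ → Set ℕ} {φ ψ : MSO α}

@[simp] theorem sat_and : Sat w ν₁ ν₂ (and φ ψ) ↔ Sat w ν₁ ν₂ φ ∧ Sat w ν₁ ν₂ ψ := by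
  simp [and, Sat]

@[simp] theorem sat_imp : Sat w ν₁ ν₂ (imp φ ψ) ↔ (Sat w ν₁ ν₂ φ → Sat w ν₁ ν₂ ψ) := by
  simp [imp, Sat, imp_iff_not_or]

@[simp] theorem sat_iff : Sat w ν₁ ν₂ (iff φ ψ) ↔ (Sat w ν₁ ν₂ φ ↔ Sat w ν₁ ν₂ ψ) := by
  simp [iff, iff_def]

@[simp] theorem sat_all1 {x : ℕ} :
    Sat w ν₁ ν₂ (all1 x φ) ↔ ∀ i < w.length, Sat w (Function.update ν₁ x i) ν₂ φ := by
  simp [all1, Sat]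

theorem sat_isFirst (h : ν₁ 0 < w.length) : Sat w ν₁ ν₂ (isFirst (α := α)) ↔ ν₁ 0 = 0 := by
  simp only [isFirst, Sat, Function.update_self, ne_eq, zero_ne_one, not_false_eq_true,
    Function.update_of_ne, not_exists, not_and, not_lt]
  exact ⟨fun h' => Nat.le_zero.mp (h' 0 (by omega)), fun h0 x _ => by omega⟩

theorem sat_isLast (h : ν₁ 0 < w.length) :
    Sat w ν₁ ν₂ (isLast (α := α)) ↔ ν₁ 0 + 1 = w.length := by
  simp only [isLast, Sat, ne_eq, zero_ne_one, not_false_eq_true, Function.update_of_ne,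
    Function.update_self, not_exists, not_and, not_lt]
  exact ⟨fun h' => by have := h' (w.length - 1) (by omega); omega, fun h0 x hx => by omega⟩

theorem sat_isSucc (h : ν₁ 1 < w.length) :
    Sat w ν₁ ν₂ (isSucc (α := α)) ↔ ν₁ 1 = ν₁ 0 + 1 := by
  simp only [isSucc, sat_and, Sat, ne_eq, OfNat.zero_ne_ofNat, not_false_eq_true,
    Function.update_of_ne, Function.update_self, OfNat.one_ne_ofNat, not_exists, not_and, not_lt]
  exact ⟨fun ⟨_, h'⟩ => by have := h' (ν₁ 0 + 1) (by omega); omega,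
    fun h1 => ⟨by omega, fun x _ hx => by omega⟩⟩

theorem sat_evenSentence (hw : w ≠ []) :
    Sat w ν₁ ν₂ (evenSentence (α := α)) ↔ Even w.length := by
  have hn := List.length_pos_of_ne_nil hw
  simp +contextual only [evenSentence, Sat, sat_and, sat_all1, sat_imp, sat_iff,
    Function.update_self, Function.update_of_ne, ne_eq, zero_ne_one, not_false_eq_true,
    sat_isFirst, sat_isSucc, sat_isLast]
  constructor
  · rintro ⟨S, -, h0, hstep, hlast⟩
    have hpar := mem_iff_even_of_alternating (h0 0 hn rfl)
      (fun i hi => hstep i (by omega) (i + 1) hi rfl) (w.length - 1) (by omega)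
    obtain ⟨k, hk⟩ := Nat.not_even_iff_odd.1 (hpar.not.1 (hlast (w.length - 1) (by omega) (by omega)))
    exact ⟨k + 1, by omega⟩
  · intro heven
    refine ⟨{i | i < w.length ∧ Even i}, fun i hi => hi.1, fun _ _ _ => ⟨hn, Even.zero⟩,
      fun i _ j hj hji => ?_, fun i _ hi ⟨_, hev⟩ => ?_⟩
    · subst hji
      simp only [Set.mem_ofPred_eq, Nat.even_add_one, hj, show i < w.length by omega, true_and]
      tauto
    · exact Nat.even_add_one.1 (hi ▸ heven) hev

end Semantics

theorem definable_Leven : Definable Leven :=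
  ⟨evenSentence, by decide, by decide,
    Set.ext fun _ => and_congr_right fun hw => (sat_evenSentence hw).symm⟩

end MSO

theorem min_tsub_eq_of_le_of_le {m a b c a' b' c' : ℕ} (hab : a ≤ b) (hbc : b ≤ c)
    (hab' : a' ≤ b') (hbc' : b' ≤ c')
    (h₁ : min (b - a) m = min (b' - a') m) (h₂ : min (c - b) m = min (c' - b') m) :
    min (c - a) m = min (c' - a') m := by
  omega

theorem exists_min_tsub_eq_of_le_of_le {m L U L' U' i : ℕ} (hLi : L ≤ i) (hiU : i ≤ U)
    (hLU' : L' ≤ U') (h : min (U - L) (2 * m) = min (U' - L') (2 * m)) :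
    ∃ i', L' ≤ i' ∧ i' ≤ U' ∧ min (i - L) m = min (i' - L') m ∧
      min (U - i) m = min (U' - i') m := by
  -- If both gaps from `i` are at least `m`, then `U' - L' ≥ 2 * m` leaves room for `L' + m`.
  refine ⟨if i - L < m then L' + (i - L) else if U - i < m then U' - (U - i) else L' + m, ?_⟩
  split_ifs <;> omega

namespace MFO

/-- With truncated subtraction and `s`, `t` ranging over ordered pairs, this records the order
of `p s` and `p t` (as soon as `1 ≤ k`) as well as their distance capped at `k`. -/
def DistEquiv (k : ℕ) (p p' : ℕ → ℕ) : Prop :=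
  ∀ s t, min (p t - p s) k = min (p' t - p' s) k

namespace DistEquiv

variable {k m : ℕ} {p p' : ℕ → ℕ}

theorem symm (h : DistEquiv k p p') : DistEquiv k p' p := fun s t => (h s t).symm

theorem mono (h : DistEquiv k p p') (hmk : m ≤ k) : DistEquiv m p p' := by
  intro s t
  have := h s t
  omega

theorem le_iff (h : DistEquiv k p p') (hk : 1 ≤ k) (s t : ℕ) : p s ≤ p t ↔ p' s ≤ p' t := by
  have := h t s
  omega

theorem update (h : DistEquiv k p p') {z i i' : ℕ}
    (hi : ∀ t, min (i - p t) k = min (i' - p' t) k ∧ min (p t - i) k = min (p' t - i') k) :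
    DistEquiv k (Function.update p z i) (Function.update p' z i') := by
  intro s t
  simp only [Function.update_apply]
  split_ifs
  · simp
  · exact (hi s).1
  · exact (hi t).2
  · exact h s t

theorem exists_extend (h : DistEquiv (2 * m) p p') (hm : 1 ≤ m) {i : ℕ}
    (hlo : ∃ s, p s ≤ i) (hhi : ∃ s, i ≤ p s) :
    ∃ i', (∃ s, i' ≤ p' s) ∧
      ∀ t, min (i - p t) m = min (i' - p' t) m ∧ min (p t - i) m = min (p' t - i') m := by
  obtain ⟨L, hLi, hLmax⟩ : ∃ L, p L ≤ i ∧ ∀ t, p t ≤ i → p t ≤ p L := by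
    obtain ⟨a, ha⟩ := hlo
    have hmem := Function.argminOn_mem (fun t => i - p t) {t | p t ≤ i} ⟨a, ha⟩
    refine ⟨_, hmem, fun t ht => ?_⟩
    have := Function.argminOn_le (fun t => i - p t) {t | p t ≤ i} ht
    simp only [Set.mem_ofPred_eq] at hmem this
    omega
  obtain ⟨U, hiU, hUmin⟩ : ∃ U, i ≤ p U ∧ ∀ t, i ≤ p t → p U ≤ p t := by
    obtain ⟨b, hb⟩ := hhi
    exact ⟨_, Function.argminOn_mem p {t | i ≤ p t} ⟨b, hb⟩,
      fun t ht => Function.argminOn_le p {t | i ≤ p t} ht⟩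
  have hsplit : ∀ t, p t ≤ p L ∨ p U ≤ p t := fun t =>
    (le_or_gt (p t) i).imp (hLmax t) (fun ht => hUmin t ht.le)
  have hle := h.le_iff (by omega)
  obtain ⟨i', hLi', hiU', hdL, hdU⟩ := exists_min_tsub_eq_of_le_of_le hLi hiU
    ((hle L U).1 (hLi.trans hiU)) (h L U)
  refine ⟨i', ⟨U, hiU'⟩, fun t => ?_⟩
  have htL := (h.mono (by omega : m ≤ 2 * m)) t L
  have hLt := (h.mono (by omega : m ≤ 2 * m)) L t
  rcases hsplit t with ht | ht
  · have ht' := (hle t L).1 ht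
    exact ⟨min_tsub_eq_of_le_of_le ht hLi ht' hLi' htL hdL, by omega⟩
  · have ht' := (hle U t).1 ht
    have hUt := (h.mono (by omega : m ≤ 2 * m)) U t
    exact ⟨by omega, min_tsub_eq_of_le_of_le hiU ht hiU' ht' hdU hUt⟩

end DistEquiv

def quantifierDepth {α : Type} : MFO α → ℕ
  | .char _ _ => 0
  | .lt _ _ => 0
  | .not φ => quantifierDepth φ
  | .or φ ψ => max (quantifierDepth φ) (quantifierDepth ψ)
  | .ex _ φ => quantifierDepth φ + 1

/-- Pinning the ends `0` and `n - 1` as two extra pebbles makes the distances to the ends of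
the word part of a configuration. -/
def withEnds (n : ℕ) (ν : ℕ → ℕ) : ℕ → ℕ
  | 0 => 0
  | 1 => n - 1
  | t + 2 => ν t

theorem withEnds_update (n : ℕ) (ν : ℕ → ℕ) (x i : ℕ) :
    withEnds n (Function.update ν x i) = Function.update (withEnds n ν) (x + 2) i := by
  funext t
  rcases t with _ | _ | t
  · rfl
  · rfl
  · simp only [withEnds, Function.update_apply, Nat.add_right_cancel_iff]

theorem withEnds_lt {n : ℕ} {ν : ℕ → ℕ} (hν : ∀ t, ν t < n) (t : ℕ) : withEnds n ν t < n := by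
  have := hν 0
  rcases t with _ | _ | t
  · exact this.trans_le' (Nat.zero_le _)
  · exact Nat.sub_lt (by omega) one_pos
  · exact hν t

def Similar (k n n' : ℕ) (ν ν' : ℕ → ℕ) : Prop :=
  (∀ t, ν t < n) ∧ (∀ t, ν' t < n') ∧ DistEquiv k (withEnds n ν) (withEnds n' ν')

namespace Similar

variable {k m n n' : ℕ} {ν ν' : ℕ → ℕ}

theorem symm (h : Similar k n n' ν ν') : Similar k n' n ν' ν :=
  ⟨h.2.1, h.1, h.2.2.symm⟩

theorem mono (h : Similar k n n' ν ν') (hmk : m ≤ k) : Similar m n n' ν ν' :=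
  ⟨h.1, h.2.1, h.2.2.mono hmk⟩

theorem exists_update (h : Similar (2 * m) n n' ν ν') (hm : 1 ≤ m) (x : ℕ) {i : ℕ}
    (hi : i < n) : ∃ i' < n', Similar m n n' (Function.update ν x i) (Function.update ν' x i') := by
  obtain ⟨hν, hν', hd⟩ := h
  obtain ⟨i', ⟨s, hs⟩, hi'⟩ := hd.exists_extend hm (i := i) ⟨0, Nat.zero_le i⟩
    ⟨1, Nat.le_sub_one_of_lt hi⟩
  have update_lt {N j : ℕ} {μ : ℕ → ℕ} (hμ : ∀ t, μ t < N) (hj : j < N) :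
      ∀ t, Function.update μ x j t < N :=
    (Function.forall_update_iff μ (p := fun _ v => v < N)).2 ⟨hj, fun t _ => hμ t⟩
  have hi'n' : i' < n' := hs.trans_lt (withEnds_lt hν' s)
  refine ⟨i', hi'n', update_lt hν hi, update_lt hν' hi'n', ?_⟩
  rw [withEnds_update, withEnds_update]
  exact (hd.mono (by omega)).update hi'

end Similar

theorem sat_replicate_iff_of_similar (φ : MFO Unit) :
    ∀ {n n' : ℕ} {ν ν' : ℕ → ℕ}, Similar (2 ^ quantifierDepth φ) n n' ν ν' →
      (Sat (List.replicate n ()) ν φ ↔ Sat (List.replicate n' ()) ν' φ) := by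
  induction φ with
  | char a x =>
    intro n n' ν ν' h
    simp [Sat, h.1 x, h.2.1 x]
  | lt x y =>
    intro n n' ν ν' h
    simpa only [Sat, withEnds, not_le] using (h.2.2.le_iff Nat.one_le_two_pow (y + 2) (x + 2)).not
  | not φ ih => exact fun h => not_congr (ih h)
  | or φ ψ ih₁ ih₂ =>
    intro n n' ν ν' h
    exact or_congr (ih₁ (h.mono (Nat.pow_le_pow_right two_pos (le_max_left _ _))))
      (ih₂ (h.mono (Nat.pow_le_pow_right two_pos (le_max_right _ _))))
  | ex x φ ih =>
    intro n n' ν ν' h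
    rw [quantifierDepth, pow_succ'] at h
    simp only [Sat, List.length_replicate]
    constructor
    · rintro ⟨i, hi, hsat⟩
      obtain ⟨i', hi', h'⟩ := h.exists_update Nat.one_le_two_pow x hi
      exact ⟨i', hi', (ih h').1 hsat⟩
    · rintro ⟨i', hi', hsat⟩
      obtain ⟨i, hi, h'⟩ := h.symm.exists_update Nat.one_le_two_pow x hi'
      exact ⟨i, hi, (ih h').1 hsat⟩

theorem similar_const_zero {k n n' : ℕ} (hn : k < n) (hn' : k < n') :
    Similar k n n' (fun _ => 0) (fun _ => 0) := by
  refine ⟨fun _ => Nat.zero_lt_of_lt hn, fun _ => Nat.zero_lt_of_lt hn', fun s t => ?_⟩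
  rcases s with _ | _ | s <;> rcases t with _ | _ | t <;> simp only [withEnds] <;> omega

theorem not_definable_Leven : ¬ Definable Leven := by
  rintro ⟨φ, -, hL⟩
  set k := 2 ^ quantifierDepth φ
  have hk : 1 ≤ k := Nat.one_le_two_pow
  have hsim : Similar k (2 * k) (2 * k + 1) (fun _ => 0) (fun _ => 0) :=
    similar_const_zero (by omega) (by omega)
  have heven : List.replicate (2 * k) () ∈ φ.Lang := by
    rw [← hL]
    exact ⟨by simpa using Nat.one_le_iff_ne_zero.mp hk, by simp⟩
  have hodd : List.replicate (2 * k + 1) () ∉ φ.Lang := by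
    rw [← hL]
    rintro ⟨-, hev⟩
    simp at hev
  exact hodd ⟨by simp, (sat_replicate_iff_of_similar φ hsim).1 heven.2⟩

end MFO

/-- MSO is strictly more expressive than MFO: every
MFO-definable language is MSO-definable, and the MSO-definable language
`L_even` is not MFO-definable. -/
theorem mso_strictly_more_expressive_than_mfo :
    (∀ (α : Type) (L : Set (List α)), MFO.Definable L → MSO.Definable L) ∧
    MSO.Definable Leven ∧ ¬ MFO.Definable Leven :=
  ⟨fun _ _ h => h.toMSO, MSO.definable_Leven, MFO.not_definable_Leven⟩
end
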